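/- Fix Δ > 0, a dither k ∈ ℝ, a bit m ∈ {0,1} and a scaling factor α with 1/2 < α < 1. With the floor quantizer Q_{(m,k)}(s) = Δ·⌊(s − d_m − k)/Δ⌋ + d_m + k (where d_0 = −Δ/4, d_1 = Δ/4), the watermarked value s_w = α·Q_{(m,k)}(s) + (1−α)·s satisfies Q_{(m,k)}(s) ≤ s_w < Q_{(m,k)}(s) + Δ/2. Consequently Q_{(m,k)}(s) is the greatest element of Λ_0 ∪ Λ_1 that does not exceed s_w, it lies in Λ_m, and both m and s = (s_w − α·Q_{(m,k)}(s))/(1−α) are exactly recoverable from s_w. -/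

import Mathlib

/-- The dither of binary QIM: `d₀ = −Δ/4`, `d₁ = Δ/4`. -/
noncomputable def qimDither (Δ : ℝ) (m : Fin 2) : ℝ :=
  if m = 0 then -(Δ / 4) else Δ / 4

/-- The dithered codebook `Λ_j = {d_j + k + ℓΔ : ℓ ∈ ℤ}` for `j ∈ {0,1}`. -/
def qimCodebook (Δ k : ℝ) (m : Fin 2) : Set ℝ :=
  {x : ℝ | ∃ ℓ : ℤ, x = qimDither Δ m + k + (ℓ : ℝ) * Δ}

/-- The paper's floor quantizer (Eq. 9):
`Q_{(m,k)}(s) = Δ·⌊(s − d_m − k)/Δ⌋ + d_m + k`. -/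
noncomputable def qimFloorQuant (Δ k : ℝ) (m : Fin 2) (s : ℝ) : ℝ :=
  Δ * (⌊(s - qimDither Δ m - k) / Δ⌋ : ℝ) + qimDither Δ m + k

private lemma qim_key (Δ : ℝ) (hΔ : 0 < Δ) (a b : ℤ)
    (h : (a : ℝ) * Δ < (b : ℝ) * Δ + Δ) : (a : ℝ) * Δ ≤ (b : ℝ) * Δ := by
  have h1 : (a : ℝ) < (b : ℝ) + 1 := by nlinarith
  have h2 : a ≤ b := by
    have : a < b + 1 := by exact_mod_cast h1
    omega
  have h3 : (a : ℝ) ≤ (b : ℝ) := by exact_mod_cast h2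
  nlinarith

private lemma qim_key2 (Δ : ℝ) (hΔ : Δ ≠ 0) (a : ℤ)
    (h : (a : ℝ) * Δ = Δ / 2) : False := by
  have h2 : ((2 * a - 1 : ℤ) : ℝ) * Δ = 0 := by push_cast; linear_combination 2 * h
  have h3 : ((2 * a - 1 : ℤ) : ℝ) = 0 := (mul_eq_zero.mp h2).resolve_right hΔ
  have h4 : (2 * a - 1 : ℤ) = 0 := by exact_mod_cast h3
  omega

/-- Binary R-QIM with the floor quantizer: the watermarked value
`s_w = α·Q_{(m,k)}(s) + (1−α)·s` satisfies `Q_{(m,k)}(s) ≤ s_w < Q_{(m,k)}(s) + Δ/2`;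
`Q_{(m,k)}(s)` lies in `Λ_m`, it is the greatest point of `Λ_0 ∪ Λ_1` not
exceeding `s_w`, only the codebook `Λ_m` contains it (so `m` is unambiguously
recoverable), and `(s_w − α·Q_{(m,k)}(s))/(1−α) = s` recovers the cover. -/
theorem rqim_floor_quantizer_reversible (Δ : ℝ) (hΔ : 0 < Δ) (k : ℝ)
    (m : Fin 2) (α : ℝ) (hα0 : 1 / 2 < α) (hα1 : α < 1) (s : ℝ) :
    (qimFloorQuant Δ k m s ≤ α * qimFloorQuant Δ k m s + (1 - α) * s ∧
      α * qimFloorQuant Δ k m s + (1 - α) * s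
        < qimFloorQuant Δ k m s + Δ / 2) ∧
    qimFloorQuant Δ k m s ∈ qimCodebook Δ k m ∧
    (∀ q ∈ qimCodebook Δ k 0 ∪ qimCodebook Δ k 1,
      q ≤ α * qimFloorQuant Δ k m s + (1 - α) * s → q ≤ qimFloorQuant Δ k m s) ∧
    (∀ m' : Fin 2, qimFloorQuant Δ k m s ∈ qimCodebook Δ k m' → m' = m) ∧
    ((α * qimFloorQuant Δ k m s + (1 - α) * s)
        - α * qimFloorQuant Δ k m s) / (1 - α) = s := by
  have hΔ' : Δ ≠ 0 := ne_of_gt hΔ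
  have h1α : (0 : ℝ) < 1 - α := by linarith
  have hd0 : qimDither Δ 0 = -(Δ / 4) := by simp [qimDither]
  have hd1 : qimDither Δ 1 = Δ / 4 := by norm_num [qimDither]
  obtain ⟨d, hdQ, hdm⟩ :
      ∃ d : ℝ, qimFloorQuant Δ k m s = Δ * (⌊(s - d - k) / Δ⌋ : ℝ) + d + k ∧
        ((d = -(Δ / 4) ∧ m = 0) ∨ (d = Δ / 4 ∧ m = 1)) := by
    refine ⟨qimDither Δ m, rfl, ?_⟩
    fin_cases m
    · exact Or.inl ⟨hd0, rfl⟩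
    · exact Or.inr ⟨hd1, rfl⟩
  set ℓ₀ : ℤ := ⌊(s - d - k) / Δ⌋ with hℓ₀
  have h1 : 0 ≤ (s - d - k) - (ℓ₀ : ℝ) * Δ :=
    Int.sub_floor_div_mul_nonneg (s - d - k) hΔ
  have h2 : (s - d - k) - (ℓ₀ : ℝ) * Δ < Δ :=
    Int.sub_floor_div_mul_lt (s - d - k) hΔ
  have hQle : qimFloorQuant Δ k m s ≤ s := by rw [hdQ]; linarith
  have hQlt : s < qimFloorQuant Δ k m s + Δ := by rw [hdQ]; linarith
  have hup : α * qimFloorQuant Δ k m s + (1 - α) * s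
      < qimFloorQuant Δ k m s + Δ / 2 := by nlinarith
  have hmem : qimFloorQuant Δ k m s ∈ qimCodebook Δ k m :=
    ⟨⌊(s - qimDither Δ m - k) / Δ⌋, by unfold qimFloorQuant; ring⟩
  refine ⟨⟨by nlinarith, hup⟩, hmem, ?_, ?_, ?_⟩
  · rintro q (⟨ℓ, rfl⟩ | ⟨ℓ, rfl⟩) hq <;>
      have hlt := lt_of_le_of_lt hq hup <;>
      rw [hdQ] at hlt ⊢ <;>
      [rw [hd0] at hlt ⊢; rw [hd1] at hlt ⊢] <;>
      rcases hdm with ⟨rfl, _⟩ | ⟨rfl, _⟩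
    · have := qim_key Δ hΔ ℓ ℓ₀ (by linarith); linarith
    · have := qim_key Δ hΔ ℓ ℓ₀ (by linarith); linarith
    · have := qim_key Δ hΔ ℓ (ℓ₀ - 1) (by push_cast; linarith)
      push_cast at this; linarith
    · have := qim_key Δ hΔ ℓ ℓ₀ (by linarith); linarith
  · rintro m' ⟨ℓ, hℓ⟩
    rw [hdQ] at hℓ
    have hm2 : m' = 0 ∨ m' = 1 := by omega
    rcases hm2 with rfl | rfl <;> rcases hdm with ⟨rfl, rfl⟩ | ⟨rfl, rfl⟩
    · rfl
    · rw [hd0] at hℓ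
      exact (qim_key2 Δ hΔ' (ℓ - ℓ₀) (by push_cast; linear_combination -hℓ)).elim
    · rw [hd1] at hℓ
      exact (qim_key2 Δ hΔ' (ℓ₀ - ℓ) (by push_cast; linear_combination hℓ)).elim
    · rfl
  · have h1α' : (1 : ℝ) - α ≠ 0 := ne_of_gt h1α
    field_simp
    ring
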